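/- arXiv:1509.03362 — 7 statements merged into one kernel-verified Lean document; each statement's English description precedes it below -/
import Mathlib

section
/- Let S be the decomposable operator on L²(X,μ;H) with measurable field T, and assume μ ≠ 0. Then the operator norm of S equals the μ-essential supremum of the function ζ ↦ ‖T(ζ)‖. -/
open MeasureTheory
open scoped ENNReal

/-- `T` is a measurable field of bounded operators: pointwise measurable and
essentially bounded in operator norm. -/
def MeasurableFieldOfOperators {X : Type*} [MeasurableSpace X]
    {H : Type*} [NormedAddCommGroup H] [InnerProductSpace ℂ H]
    [MeasurableSpace H] [BorelSpace H]
    (μ : Measure X) (T : X → H →L[ℂ] H) : Prop :=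
  (∀ x : H, Measurable fun ζ => T ζ x) ∧ ∃ C : ℝ, ∀ᵐ ζ ∂μ, ‖T ζ‖ ≤ C

/-- `S` is the decomposable operator on `L²(X, μ; H)` with field `T`. -/
def IsDecomposableOperatorWith {X : Type*} [MeasurableSpace X]
    {H : Type*} [NormedAddCommGroup H] [InnerProductSpace ℂ H]
    (μ : Measure X) (S : Lp H 2 μ →L[ℂ] Lp H 2 μ) (T : X → H →L[ℂ] H) : Prop :=
  ∀ f : Lp H 2 μ, ∀ᵐ ζ ∂μ, (S f : X → H) ζ = T ζ ((f : X → H) ζ)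

theorem norm_of_decomposable_eq_essSup
    {X : Type*} [MeasurableSpace X] [StandardBorelSpace X]
    {μ : Measure X} [SigmaFinite μ]
    {H : Type*} [NormedAddCommGroup H] [InnerProductSpace ℂ H]
    [CompleteSpace H] [SecondCountableTopology H] [MeasurableSpace H] [BorelSpace H]
    (T : X → H →L[ℂ] H) (hT : MeasurableFieldOfOperators μ T)
    (S : Lp H 2 μ →L[ℂ] Lp H 2 μ) (hS : IsDecomposableOperatorWith μ S T)
    (hμ : μ ≠ 0) :
    ‖S‖ = essSup (fun ζ => ‖T ζ‖) μ := by
  have hne : (ae μ).NeBot := ae_neBot.mpr hμ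
  obtain ⟨hmeas, C, hC⟩ := hT
  set c : ℝ := ‖S‖ with hc
  have hc0 : 0 ≤ c := norm_nonneg S
  set M : ℝ := essSup (fun ζ => ‖T ζ‖) μ with hM
  have hbdd : Filter.IsBoundedUnder (· ≤ ·) (ae μ) fun ζ => ‖T ζ‖ :=
    ⟨C, Filter.eventually_map.mpr hC⟩
  have hMle : ∀ᵐ ζ ∂μ, ‖T ζ‖ ≤ M := ae_le_essSup hbdd
  have hM0 : 0 ≤ M := by
    obtain ⟨ζ, h1, h2⟩ := (hMle.and (Filter.Eventually.of_forall
      (fun ζ => norm_nonneg (T ζ)))).exists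
    exact le_trans h2 h1
  -- key lemma: for each fixed vector, the pointwise bound ‖T ζ x‖ ≤ ‖S‖ ‖x‖ holds a.e.
  have key : ∀ x : H, ∀ᵐ ζ ∂μ, ‖T ζ x‖ ≤ c * ‖x‖ := by
    intro x
    have hmeasA : ∀ n : ℕ, MeasurableSet {ζ | c * ‖x‖ + 1 / (n + 1) ≤ ‖T ζ x‖} := fun n =>
      measurableSet_le measurable_const ((hmeas x).norm)
    have hA : ∀ n : ℕ, μ {ζ | c * ‖x‖ + 1 / (n + 1) ≤ ‖T ζ x‖} = 0 := by
      intro n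
      by_contra h
      set a : ℝ := c * ‖x‖ + 1 / (n + 1) with ha_def
      have ha : 0 < a := by positivity
      obtain ⟨B, hBm, hBsub, hB0, hBfin⟩ :=
        Measure.exists_subset_measure_lt_top (hmeasA n) (pos_iff_ne_zero.mpr h)
      set f : Lp H 2 μ := indicatorConstLp 2 hBm hBfin.ne x with hf
      set g : Lp ℝ 2 μ := indicatorConstLp 2 hBm hBfin.ne a with hg
      have hcomp : ∀ᵐ ζ ∂μ, ‖(g : X → ℝ) ζ‖ ≤ ‖(S f : X → H) ζ‖ := by
        filter_upwards [hS f, indicatorConstLp_coeFn (p := 2) (c := x) (hs := hBm)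
          (hμs := hBfin.ne), indicatorConstLp_coeFn (p := 2) (c := a) (hs := hBm)
          (hμs := hBfin.ne)] with ζ h1 h2 h3
        rw [h1, h2, h3]
        by_cases hζ : ζ ∈ B
        · rw [Set.indicator_of_mem hζ, Set.indicator_of_mem hζ]
          have := hBsub hζ
          rw [Set.mem_setOf_eq] at this
          rw [Real.norm_eq_abs, abs_of_pos ha]
          exact this
        · simp [Set.indicator_of_notMem hζ]
      have hle : ‖g‖ ≤ ‖S f‖ := by
        rw [Lp.norm_def, Lp.norm_def]
        exact ENNReal.toReal_mono (Lp.eLpNorm_ne_top _) (eLpNorm_mono_ae hcomp)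
      have hSop : ‖S f‖ ≤ c * ‖f‖ := S.le_opNorm f
      set r : ℝ := (μ B).toReal ^ (1 / (2 : ℝ≥0∞).toReal) with hr_def
      have hr : 0 < r := by
        apply Real.rpow_pos_of_pos
        exact ENNReal.toReal_pos hB0.ne' hBfin.ne
      have hgnorm : ‖g‖ = a * r := by
        rw [hg, norm_indicatorConstLp two_ne_zero ENNReal.ofNat_ne_top,
          Real.norm_eq_abs, abs_of_pos ha]; rfl
      have hfnorm : ‖f‖ = ‖x‖ * r := by
        rw [hf, norm_indicatorConstLp two_ne_zero ENNReal.ofNat_ne_top]; rfl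
      have : a * r ≤ c * (‖x‖ * r) := by
        rw [← hgnorm, ← hfnorm]; exact hle.trans hSop
      have han : a ≤ c * ‖x‖ := by
        have := (mul_le_mul_iff_of_pos_right hr).mp (by linarith [this] : a * r ≤ (c * ‖x‖) * r)
        exact this
      have : (0 : ℝ) < 1 / (n + 1) := by positivity
      linarith [han, ha_def ▸ han]
    have hnull : μ {ζ | c * ‖x‖ < ‖T ζ x‖} = 0 := by
      have hsub : {ζ | c * ‖x‖ < ‖T ζ x‖} ⊆
          ⋃ n : ℕ, {ζ | c * ‖x‖ + 1 / (n + 1) ≤ ‖T ζ x‖} := by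
        intro ζ hζ
        rw [Set.mem_setOf_eq] at hζ
        obtain ⟨n, hn⟩ := exists_nat_one_div_lt (sub_pos.mpr hζ)
        exact Set.mem_iUnion.mpr ⟨n, by simp only [Set.mem_setOf_eq]; linarith⟩
      exact measure_mono_null hsub (measure_iUnion_null hA)
    rw [ae_iff]
    convert hnull using 2
    ext ζ
    simp [not_le]
  -- from the key lemma, a.e. bound on operator norms via density
  have hTle : ∀ᵐ ζ ∂μ, ‖T ζ‖ ≤ c := by
    have : Nonempty H := ⟨0⟩
    obtain ⟨u, hu⟩ := TopologicalSpace.exists_dense_seq H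
    have hall : ∀ᵐ ζ ∂μ, ∀ n : ℕ, ‖T ζ (u n)‖ ≤ c * ‖u n‖ :=
      (ae_all_iff).mpr fun n => key (u n)
    filter_upwards [hall] with ζ hζ
    refine (T ζ).opNorm_le_bound hc0 fun y => ?_
    have hclosed : IsClosed {y : H | ‖T ζ y‖ ≤ c * ‖y‖} :=
      isClosed_le ((T ζ).continuous.norm) (continuous_const.mul continuous_norm)
    have hrange : Set.range u ⊆ {y : H | ‖T ζ y‖ ≤ c * ‖y‖} := by
      rintro _ ⟨n, rfl⟩; exact hζ n
    have := hclosed.closure_subset_iff.mpr hrange (hu y)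
    exact this
  refine le_antisymm ?_ ?_
  · -- ‖S‖ ≤ essSup
    refine S.opNorm_le_bound hM0 fun f => ?_
    have h1 : ∀ᵐ ζ ∂μ, ‖(S f : X → H) ζ‖ ≤ (M.toNNReal : ℝ) * ‖(f : X → H) ζ‖ := by
      filter_upwards [hS f, hMle] with ζ h hMζ
      rw [h, Real.coe_toNNReal _ hM0]
      exact le_trans ((T ζ).le_opNorm _) (mul_le_mul_of_nonneg_right hMζ (norm_nonneg _))
    have h2 := eLpNorm_le_nnreal_smul_eLpNorm_of_ae_le_mul h1 2
    rw [Lp.norm_def, Lp.norm_def]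
    calc (eLpNorm (S f : X → H) 2 μ).toReal
        ≤ (M.toNNReal • eLpNorm (f : X → H) 2 μ).toReal := by
          refine ENNReal.toReal_mono ?_ h2
          rw [ENNReal.smul_def, smul_eq_mul]
          exact ENNReal.mul_ne_top ENNReal.coe_ne_top (Lp.eLpNorm_ne_top f)
      _ = M * (eLpNorm (f : X → H) 2 μ).toReal := by
          rw [ENNReal.smul_def, smul_eq_mul, ENNReal.toReal_mul, ENNReal.coe_toReal,
            Real.coe_toNNReal _ hM0]
  · -- essSup ≤ ‖S‖
    exact Filter.limsup_le_of_le (Filter.isCoboundedUnder_le_of_eventually_le _ (Filter.Eventually.of_forall fun ζ => norm_nonneg (T ζ))) hTle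
end

section
/- Let S be the decomposable operator on L²(X,μ;H) with measurable field T. Then the Hilbert-space adjoint S* is the decomposable operator with field ζ ↦ T(ζ)*: for every f ∈ L²(X,μ;H), (S* f)(ζ) = (T(ζ))*(f(ζ)) for μ-almost every ζ ∈ X. -/
/-! Pairing `S† f` with the indicator `1_s · x` of a set of finite measure gives
`∫_s ⟪T ζ x, f ζ⟫`, so for each fixed `x` the functions `⟪x, (S† f) ζ⟫` and
`⟪T ζ x, f ζ⟫` have the same integrals over all such sets and agree a.e.
Running `x` through a countable dense subset of `H` then identifies `(S† f) ζ`
with `(T ζ)† (f ζ)` for a.e. `ζ`. -/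

open MeasureTheory

namespace IsDecomposableOperatorWith

variable {X : Type*} [MeasurableSpace X] {μ : Measure X}
  {H : Type*} [NormedAddCommGroup H] [InnerProductSpace ℂ H]
  {S : Lp H 2 μ →L[ℂ] Lp H 2 μ} {T : X → H →L[ℂ] H} {s : Set X}

theorem inner_apply_indicatorConstLp_ae_eq (hS : IsDecomposableOperatorWith μ S T)
    (hs : MeasurableSet s) (hμs : μ s ≠ ⊤) (x : H) (f : Lp H 2 μ) :
    (fun ζ => inner ℂ ((S (indicatorConstLp 2 hs hμs x) : X → H) ζ) ((f : X → H) ζ))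
      =ᵐ[μ] s.indicator fun ζ => inner ℂ (T ζ x) ((f : X → H) ζ) := by
  filter_upwards [hS (indicatorConstLp 2 hs hμs x),
    indicatorConstLp_coeFn (p := 2) (hs := hs) (hμs := hμs) (c := x)] with ζ hSζ hζ
  by_cases hζs : ζ ∈ s <;> simp [hSζ, hζ, hζs]

theorem integrableOn_inner_apply (hS : IsDecomposableOperatorWith μ S T)
    (hs : MeasurableSet s) (hμs : μ s ≠ ⊤) (x : H) (f : Lp H 2 μ) :
    IntegrableOn (fun ζ => inner ℂ (T ζ x) ((f : X → H) ζ)) s μ :=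
  (integrable_indicator_iff hs).1 <|
    (L2.integrable_inner _ f).congr (hS.inner_apply_indicatorConstLp_ae_eq hs hμs x f)

theorem inner_apply_indicatorConstLp (hS : IsDecomposableOperatorWith μ S T)
    (hs : MeasurableSet s) (hμs : μ s ≠ ⊤) (x : H) (f : Lp H 2 μ) :
    inner ℂ (S (indicatorConstLp 2 hs hμs x)) f
      = ∫ ζ in s, inner ℂ (T ζ x) ((f : X → H) ζ) ∂μ := by
  rw [L2.inner_def, ← integral_indicator hs]
  exact integral_congr_ae (hS.inner_apply_indicatorConstLp_ae_eq hs hμs x f)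

theorem inner_adjoint_apply_ae_eq [CompleteSpace H] [SigmaFinite μ]
    (hS : IsDecomposableOperatorWith μ S T) (f : Lp H 2 μ) (x : H) :
    (fun ζ => inner ℂ x ((ContinuousLinearMap.adjoint S f : X → H) ζ))
      =ᵐ[μ] fun ζ => inner ℂ (T ζ x) ((f : X → H) ζ) := by
  refine ae_eq_of_forall_setIntegral_eq_of_sigmaFinite
    (fun s _ hμs =>
      (integrableOn_Lp_of_measure_ne_top _ one_le_two hμs.ne).const_inner (𝕜 := ℂ) x)
    (fun s hs hμs => hS.integrableOn_inner_apply hs hμs.ne x f) fun s hs hμs => ?_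
  rw [← L2.inner_indicatorConstLp_eq_setIntegral_inner ℂ _ hs x hμs.ne,
    ContinuousLinearMap.adjoint_inner_right, hS.inner_apply_indicatorConstLp hs hμs.ne]

end IsDecomposableOperatorWith

theorem adjoint_of_decomposable_general
    {X : Type*} [MeasurableSpace X]
    {μ : Measure X} [SigmaFinite μ]
    {H : Type*} [NormedAddCommGroup H] [InnerProductSpace ℂ H]
    [CompleteSpace H] [SecondCountableTopology H]
    (T : X → H →L[ℂ] H)
    (S : Lp H 2 μ →L[ℂ] Lp H 2 μ) (hS : IsDecomposableOperatorWith μ S T) :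
    IsDecomposableOperatorWith μ (ContinuousLinearMap.adjoint S)
      (fun ζ => ContinuousLinearMap.adjoint (T ζ)) := by
  intro f
  have h : (fun ζ => (ContinuousLinearMap.adjoint S f : X → H) ζ
      - ContinuousLinearMap.adjoint (T ζ) ((f : X → H) ζ)) =ᵐ[μ] 0 := by
    refine ae_eq_zero_of_forall_inner (𝕜 := ℂ) fun x => ?_
    filter_upwards [hS.inner_adjoint_apply_ae_eq f x] with ζ hζ
    rw [inner_sub_right, hζ, ContinuousLinearMap.adjoint_inner_right, sub_self, Pi.zero_apply]
  filter_upwards [h] with ζ hζ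
  exact sub_eq_zero.1 hζ

theorem adjoint_of_decomposable
    {X : Type*} [MeasurableSpace X] [StandardBorelSpace X]
    {μ : Measure X} [SigmaFinite μ]
    {H : Type*} [NormedAddCommGroup H] [InnerProductSpace ℂ H]
    [CompleteSpace H] [SecondCountableTopology H] [MeasurableSpace H] [BorelSpace H]
    (T : X → H →L[ℂ] H) (hT : MeasurableFieldOfOperators μ T)
    (S : Lp H 2 μ →L[ℂ] Lp H 2 μ) (hS : IsDecomposableOperatorWith μ S T) :
    IsDecomposableOperatorWith μ (ContinuousLinearMap.adjoint S)
      (fun ζ => ContinuousLinearMap.adjoint (T ζ)) :=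
  adjoint_of_decomposable_general T S hS
end

section
/- Let S be the decomposable operator on L²(X,μ;H) with measurable field T. Then S is a normal operator (i.e. S*S = SS*, IsStarNormal S) if and only if T(ζ) is a normal operator on H for μ-almost every ζ ∈ X. -/
open MeasureTheory

/-! Testing `S` against the functions `1_s x` (with `μ s < ∞`) gives
`∫_s ⟪T ζ x, g ζ⟫ = ⟪S (1_s x), g⟫ = ⟪1_s x, S† g⟫ = ∫_s ⟪x, (S† g) ζ⟫`, so `S†` is decomposable
with field `ζ ↦ T(ζ)†`; a countable dense set of `x` suffices since `H` is separable. The same test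
functions show that a decomposable operator determines its field up to a null set. Hence `S† S` and
`S S†`, decomposable with fields `T† T` and `T T†`, are equal iff these fields agree almost
everywhere. -/

open scoped InnerProductSpace
open ContinuousLinearMap

theorem ContinuousLinearMap.ae_eq_of_forall_apply_ae_eq {X 𝕜 E F : Type*} [MeasurableSpace X]
    {μ : Measure X} [Semiring 𝕜] [TopologicalSpace E] [AddCommMonoid E] [Module 𝕜 E]
    [TopologicalSpace.SeparableSpace E] [TopologicalSpace F] [AddCommMonoid F] [Module 𝕜 F]
    [T2Space F] {T U : X → E →L[𝕜] F} (h : ∀ x, ∀ᵐ ζ ∂μ, T ζ x = U ζ x) : T =ᵐ[μ] U := by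
  obtain ⟨s, hs_countable, hs_dense⟩ := TopologicalSpace.exists_countable_dense E
  filter_upwards [(ae_ball_iff hs_countable).2 fun x _ => h x] with ζ hζ
  exact DFunLike.coe_injective (Continuous.ext_on hs_dense (T ζ).continuous (U ζ).continuous hζ)

theorem ContinuousLinearMap.isStarNormal_iff_adjoint_mul_self {𝕜 E : Type*} [RCLike 𝕜]
    [NormedAddCommGroup E] [InnerProductSpace 𝕜 E] [CompleteSpace E] (A : E →L[𝕜] E) :
    IsStarNormal A ↔ adjoint A * A = A * adjoint A := by
  rw [isStarNormal_iff, star_eq_adjoint, commute_iff_eq]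

namespace IsDecomposableOperatorWith

variable {X : Type*} [MeasurableSpace X] {μ : Measure X}
  {H : Type*} [NormedAddCommGroup H] [InnerProductSpace ℂ H]
  {S R : Lp H 2 μ →L[ℂ] Lp H 2 μ} {T U : X → H →L[ℂ] H}

theorem mul (hS : IsDecomposableOperatorWith μ S T) (hR : IsDecomposableOperatorWith μ R U) :
    IsDecomposableOperatorWith μ (S * R) (fun ζ => T ζ * U ζ) := fun f => by
  filter_upwards [hS (R f), hR f] with ζ hSζ hRζ
  exact hSζ.trans (congrArg (T ζ) hRζ)

theorem eq_of_ae_eq (hS : IsDecomposableOperatorWith μ S T)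
    (hR : IsDecomposableOperatorWith μ R U) (hTU : T =ᵐ[μ] U) : S = R :=
  ContinuousLinearMap.ext fun f => Lp.ext <| by
    filter_upwards [hS f, hR f, hTU] with ζ hSζ hRζ hTUζ
    rw [hSζ, hRζ, hTUζ]

theorem coeFn_apply_indicatorConstLp (hS : IsDecomposableOperatorWith μ S T) {s : Set X}
    (hs : MeasurableSet s) (hμs : μ s ≠ ⊤) (x : H) :
    (S (indicatorConstLp 2 hs hμs x) : X → H) =ᵐ[μ] s.indicator fun ζ => T ζ x := by
  filter_upwards [hS (indicatorConstLp 2 hs hμs x),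
    indicatorConstLp_coeFn (hs := hs) (hμs := hμs) (c := x)] with ζ hSζ hζ
  rw [hSζ, hζ]
  by_cases hζs : ζ ∈ s <;> simp [hζs]

theorem unique [SigmaFinite μ] [TopologicalSpace.SeparableSpace H]
    (hT : IsDecomposableOperatorWith μ S T) (hU : IsDecomposableOperatorWith μ S U) :
    T =ᵐ[μ] U := by
  refine ContinuousLinearMap.ae_eq_of_forall_apply_ae_eq fun x =>
    ae_of_forall_measure_lt_top_ae_restrict _ fun s hs hμs => ?_
  have hTU := (hT.coeFn_apply_indicatorConstLp hs hμs.ne x).symm.trans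
    (hU.coeFn_apply_indicatorConstLp hs hμs.ne x)
  filter_upwards [ae_restrict_of_ae hTU, ae_restrict_mem hs] with ζ hζ hζs
  simpa [hζs] using hζ

theorem indicator_inner_ae_eq (hS : IsDecomposableOperatorWith μ S T) {s : Set X}
    (hs : MeasurableSet s) (hμs : μ s ≠ ⊤) (x : H) (g : Lp H 2 μ) :
    (s.indicator fun ζ => ⟪T ζ x, (g : X → H) ζ⟫_ℂ) =ᵐ[μ]
      fun ζ => ⟪(S (indicatorConstLp 2 hs hμs x) : X → H) ζ, (g : X → H) ζ⟫_ℂ := by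
  filter_upwards [hS.coeFn_apply_indicatorConstLp hs hμs x] with ζ hζ
  rw [hζ]
  by_cases hζs : ζ ∈ s <;> simp [hζs]

theorem adjoint [SigmaFinite μ] [CompleteSpace H] [SecondCountableTopology H]
    (hS : IsDecomposableOperatorWith μ S T) :
    IsDecomposableOperatorWith μ (ContinuousLinearMap.adjoint S)
      fun ζ => ContinuousLinearMap.adjoint (T ζ) := by
  intro g
  have hinner : ∀ x : H, ∀ᵐ ζ ∂μ,
      ⟪x, (ContinuousLinearMap.adjoint S g : X → H) ζ⟫_ℂ = ⟪T ζ x, (g : X → H) ζ⟫_ℂ := fun x => by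
    refine ae_eq_of_forall_setIntegral_eq_of_sigmaFinite
      (fun s _ hμs => (integrableOn_Lp_of_measure_ne_top _ one_le_two hμs.ne).const_inner x)
      (fun s hs hμs => (integrable_indicator_iff hs).1 <|
        (L2.integrable_inner _ g).congr (hS.indicator_inner_ae_eq hs hμs.ne x g).symm)
      fun s hs hμs => ?_
    rw [← L2.inner_indicatorConstLp_eq_setIntegral_inner _ _ hs x hμs.ne, adjoint_inner_right,
      ← integral_indicator hs, integral_congr_ae (hS.indicator_inner_ae_eq hs hμs.ne x g),
      L2.inner_def]
  refine (sub_ae_eq_zero _ _).1 (ae_eq_zero_of_forall_inner (𝕜 := ℂ) fun x => ?_)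
  filter_upwards [hinner x] with ζ hζ
  simp [inner_sub_right, hζ, adjoint_inner_right]

end IsDecomposableOperatorWith

theorem isStarNormal_of_decomposable_iff_general
    {X : Type*} [MeasurableSpace X]
    {μ : Measure X} [SigmaFinite μ]
    {H : Type*} [NormedAddCommGroup H] [InnerProductSpace ℂ H]
    [CompleteSpace H] [SecondCountableTopology H]
    (T : X → H →L[ℂ] H)
    (S : Lp H 2 μ →L[ℂ] Lp H 2 μ) (hS : IsDecomposableOperatorWith μ S T) :
    IsStarNormal S ↔ ∀ᵐ ζ ∂μ, IsStarNormal (T ζ) := by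
  have hSadjS := hS.adjoint.mul hS
  have hSSadj := hS.mul hS.adjoint
  simp only [isStarNormal_iff_adjoint_mul_self]
  exact ⟨fun h => (h ▸ hSadjS).unique hSSadj, hSadjS.eq_of_ae_eq hSSadj⟩

theorem isStarNormal_of_decomposable_iff
    {X : Type*} [MeasurableSpace X] [StandardBorelSpace X]
    {μ : Measure X} [SigmaFinite μ]
    {H : Type*} [NormedAddCommGroup H] [InnerProductSpace ℂ H]
    [CompleteSpace H] [SecondCountableTopology H] [MeasurableSpace H] [BorelSpace H]
    (T : X → H →L[ℂ] H) (hT : MeasurableFieldOfOperators μ T)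
    (S : Lp H 2 μ →L[ℂ] Lp H 2 μ) (hS : IsDecomposableOperatorWith μ S T) :
    IsStarNormal S ↔ ∀ᵐ ζ ∂μ, IsStarNormal (T ζ) :=
  isStarNormal_of_decomposable_iff_general T S hS
end

section
/- Let S be the decomposable operator on L²(X,μ;H) with measurable field T. Then for μ-almost every ζ ∈ X, the spectrum of T(ζ) is contained in the spectrum of S: spectrum ℂ (T(ζ)) ⊆ spectrum ℂ S. -/
open MeasureTheory

/-!
Fix `z` outside `spectrum ℂ S` and put `R = (z - S)⁻¹`. Testing `z - S` and `R` on the functions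
`1_s • x` with `μ s < ∞` shows that, for each `x`, a.e. fibre `z - T ζ` satisfies
`‖x‖ ≤ ‖R‖ ‖(z - T ζ) x‖` and has `x` in its range. By separability of `H` this holds a.e.
simultaneously for all `x`, so a.e. `z - T ζ` is invertible with `‖(z - T ζ)⁻¹‖ ≤ ‖R‖`.
Running this over a countable dense subset of the resolvent set of `S`, the continuity of the
resolvent of `S` and the openness of the units of `H →L[ℂ] H` extend invertibility of `z - T ζ`
to every `z ∉ spectrum ℂ S`.
-/

open MeasureTheory Filter Topology

namespace spectrum

variable {𝕜 A B : Type*} [NontriviallyNormedField 𝕜] [NormedRing A] [NormedAlgebra 𝕜 A]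
  [CompleteSpace A] [NormedRing B] [NormedAlgebra 𝕜 B] [CompleteSpace B]

theorem notMem_of_norm_algebraMap_sub_mul_norm_resolvent_lt {a : A} {w z : 𝕜}
    (hw : w ∉ spectrum 𝕜 a) (h : ‖algebraMap 𝕜 A (z - w)‖ * ‖resolvent a w‖ < 1) :
    z ∉ spectrum 𝕜 a := by
  nontriviality A
  obtain ⟨u, hu⟩ := notMem_iff.1 hw
  have hinv : resolvent a w = ↑u⁻¹ := by rw [resolvent, ← hu, Ring.inverse_unit]
  have hsmall : ‖algebraMap 𝕜 A (z - w)‖ < ‖(↑u⁻¹ : A)‖⁻¹ := by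
    rwa [← one_div, lt_div_iff₀ (Units.norm_pos u⁻¹), ← hinv]
  refine notMem_iff.2 ?_
  convert (u.add _ hsmall).isUnit using 1
  rw [Units.val_add, hu, map_sub]
  abel

theorem subset_of_forall_norm_resolvent_le {a : A} {b : B} {D : Set 𝕜}
    (hD : (spectrum 𝕜 b)ᶜ ⊆ closure D)
    (h : ∀ w ∈ D, w ∉ spectrum 𝕜 a ∧ ‖resolvent a w‖ ≤ ‖resolvent b w‖) :
    spectrum 𝕜 a ⊆ spectrum 𝕜 b := by
  intro z hza
  by_contra hzb
  have hcont : ContinuousAt (fun w => ‖algebraMap 𝕜 A (z - w)‖ * ‖resolvent b w‖) z :=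
    (((continuous_algebraMap 𝕜 A).comp (continuous_sub_left z)).norm.continuousAt).mul
      (hasDerivAt_resolvent_const_left (Set.notMem_compl_iff.1 hzb)).continuousAt.norm
  have hnear : ∀ᶠ w in 𝓝 z, ‖algebraMap 𝕜 A (z - w)‖ * ‖resolvent b w‖ < 1 :=
    hcont.eventually_lt continuousAt_const (by simp)
  obtain ⟨w, hwD, hw⟩ := ((mem_closure_iff_frequently.1 (hD hzb)).and_eventually hnear).exists
  obtain ⟨hwa, hle⟩ := h w hwD
  exact notMem_of_norm_algebraMap_sub_mul_norm_resolvent_lt hwa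
    ((mul_le_mul_of_nonneg_left hle (norm_nonneg _)).trans_lt hw) hza

end spectrum

theorem ContinuousLinearMap.isUnit_of_norm_le_mul_norm_of_denseRange
    {𝕜 E : Type*} [NontriviallyNormedField 𝕜] [NormedAddCommGroup E] [NormedSpace 𝕜 E]
    [CompleteSpace E] {f : E →L[𝕜] E} {c : NNReal} (hf : ∀ y, ‖y‖ ≤ c * ‖f y‖)
    (hdense : DenseRange f) : IsUnit f ∧ ‖Ring.inverse f‖ ≤ c := by
  have hanti := f.antilipschitz_of_bound hf
  have hsurj : Function.Surjective f := by
    rw [← Set.range_eq_univ, ← (hanti.isClosed_range f.uniformContinuous).closure_eq]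
    exact hdense.closure_eq
  have hunit : IsUnit f := isUnit_iff_bijective.2 ⟨hanti.injective, hsurj⟩
  refine ⟨hunit, opNorm_le_bound _ c.2 fun y => ?_⟩
  calc ‖Ring.inverse f y‖ ≤ c * ‖f (Ring.inverse f y)‖ := hf _
    _ = c * ‖y‖ := by rw [← mul_apply_eq_comp, Ring.mul_inverse_cancel f hunit, one_apply_eq_self]

theorem MeasureTheory.ae_dense_of_forall_ae_mem {X H : Type*} [MeasurableSpace X]
    [TopologicalSpace H] [TopologicalSpace.SeparableSpace H] {μ : Measure X} {s : X → Set H}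
    (h : ∀ y, ∀ᵐ ζ ∂μ, y ∈ s ζ) : ∀ᵐ ζ ∂μ, Dense (s ζ) := by
  obtain ⟨D, hDc, hD⟩ := TopologicalSpace.exists_countable_dense H
  filter_upwards [(ae_ball_iff hDc).2 fun y _ => h y] with ζ hζ
  exact hD.mono hζ

open ENNReal in
theorem MeasureTheory.ae_enorm_le_of_forall_eLpNorm_indicator_le {X E F : Type*}
    [MeasurableSpace X] {μ : Measure X} [SigmaFinite μ] [NormedAddCommGroup E]
    [NormedAddCommGroup F] {p : ℝ≥0∞} (hp0 : p ≠ 0) (hp : p ≠ ∞) {f : X → E} {g : X → F}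
    (hf : AEStronglyMeasurable f μ)
    (h : ∀ s, MeasurableSet s → μ s < ∞ →
      eLpNorm (s.indicator f) p μ ≤ eLpNorm (s.indicator g) p μ) :
    ∀ᵐ ζ ∂μ, ‖f ζ‖ₑ ≤ ‖g ζ‖ₑ := by
  have hp_pos : 0 < p.toReal := toReal_pos hp0 hp
  have hpow : ∀ᵐ ζ ∂μ, ‖f ζ‖ₑ ^ p.toReal ≤ ‖g ζ‖ₑ ^ p.toReal := by
    refine ae_le_of_forall_setLIntegral_le_of_sigmaFinite₀ (hf.enorm.pow_const _)
      fun s hs hμs => ?_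
    have hs' := h s hs hμs
    rw [eLpNorm_indicator_eq_eLpNorm_restrict hs, eLpNorm_indicator_eq_eLpNorm_restrict hs,
      eLpNorm_eq_lintegral_rpow_enorm_toReal hp0 hp,
      eLpNorm_eq_lintegral_rpow_enorm_toReal hp0 hp] at hs'
    exact (rpow_le_rpow_iff (by positivity)).1 hs'
  filter_upwards [hpow] with ζ hζ
  exact (rpow_le_rpow_iff hp_pos).1 hζ

namespace IsDecomposableOperatorWith

variable {X : Type*} [MeasurableSpace X] {μ : Measure X}
  {H : Type*} [NormedAddCommGroup H] [InnerProductSpace ℂ H]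
  {S : Lp H 2 μ →L[ℂ] Lp H 2 μ} {T : X → H →L[ℂ] H}

theorem algebraMap_sub (hS : IsDecomposableOperatorWith μ S T) (z : ℂ) :
    IsDecomposableOperatorWith μ (algebraMap ℂ _ z - S) fun ζ => algebraMap ℂ _ z - T ζ := by
  intro f
  filter_upwards [hS f, Lp.coeFn_sub (z • f) (S f), Lp.coeFn_smul z f] with ζ hSf hsub hsmul
  simp only [Algebra.algebraMap_eq_smul_one, sub_apply, smul_apply, one_apply_eq_self]
  rw [hsub, Pi.sub_apply, hsmul, Pi.smul_apply, hSf]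

theorem ae_norm_le_mul_norm_apply [SigmaFinite μ] (hS : IsDecomposableOperatorWith μ S T)
    {c : NNReal} (hc : ∀ f, ‖f‖ ≤ c * ‖S f‖) (x : H) :
    ∀ᵐ ζ ∂μ, ‖x‖ ≤ c * ‖T ζ x‖ := by
  have henorm : ∀ᵐ ζ ∂μ, ‖x‖ₑ ≤ ‖(c : ℝ) • T ζ x‖ₑ := by
    refine ae_enorm_le_of_forall_eLpNorm_indicator_le two_ne_zero ENNReal.ofNat_ne_top
      aestronglyMeasurable_const fun s hs hμs => ?_
    set F : Lp H 2 μ := indicatorConstLp 2 hs hμs.ne x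
    have hF : s.indicator (fun _ => x) =ᵐ[μ] F := indicatorConstLp_coeFn.symm
    have hSF : s.indicator (fun ζ => (c : ℝ) • T ζ x) =ᵐ[μ] ⇑((c : ℝ) • S F) := by
      filter_upwards [indicatorConstLp_coeFn (p := 2) (hs := hs) (hμs := hμs.ne) (c := x),
        hS F, Lp.coeFn_smul (c : ℝ) (S F)] with ζ hFζ hSFζ hsmul
      rw [hsmul, Pi.smul_apply, hSFζ, hFζ]
      by_cases hζ : ζ ∈ s <;> simp [hζ]
    rw [eLpNorm_congr_ae hF, eLpNorm_congr_ae hSF, ← Lp.enorm_def, ← Lp.enorm_def,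
      ← ofReal_norm, ← ofReal_norm, norm_smul, NNReal.norm_eq]
    exact ENNReal.ofReal_le_ofReal (hc F)
  filter_upwards [henorm] with ζ hζ
  rwa [← ofReal_norm, ← ofReal_norm, norm_smul, NNReal.norm_eq,
    ENNReal.ofReal_le_ofReal_iff (by positivity)] at hζ

theorem ae_mem_range_apply [SigmaFinite μ] (hS : IsDecomposableOperatorWith μ S T)
    (hsurj : Function.Surjective S) (x : H) : ∀ᵐ ζ ∂μ, x ∈ Set.range (T ζ) := by
  refine ae_of_forall_measure_lt_top_ae_restrict _ fun s hs hμs => ?_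
  obtain ⟨g, hg⟩ := hsurj (indicatorConstLp 2 hs hμs.ne x)
  filter_upwards [ae_restrict_mem hs, ae_restrict_of_ae (hS g),
    ae_restrict_of_ae (indicatorConstLp_coeFn (p := 2) (hs := hs) (hμs := hμs.ne) (c := x))]
    with ζ hζ hSg hF
  refine ⟨(g : X → H) ζ, ?_⟩
  rw [← hSg, hg, hF, Set.indicator_of_mem hζ]

variable [CompleteSpace H] [SecondCountableTopology H]

theorem ae_isUnit [SigmaFinite μ] (hS : IsDecomposableOperatorWith μ S T) (hu : IsUnit S) :
    ∀ᵐ ζ ∂μ, IsUnit (T ζ) ∧ ‖Ring.inverse (T ζ)‖ ≤ ‖Ring.inverse S‖ := by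
  have hbound : ∀ f, ‖f‖ ≤ ‖Ring.inverse S‖₊ * ‖S f‖ := fun f =>
    calc ‖f‖ = ‖Ring.inverse S (S f)‖ := by
          rw [← mul_apply_eq_comp, Ring.inverse_mul_cancel S hu, one_apply_eq_self]
      _ ≤ ‖Ring.inverse S‖₊ * ‖S f‖ := (Ring.inverse S).le_opNorm _
  have hsurj : Function.Surjective S := (ContinuousLinearMap.isUnit_iff_bijective.1 hu).2
  filter_upwards [
    ae_dense_of_forall_ae_mem (s := fun ζ => {y | ‖y‖ ≤ ‖Ring.inverse S‖₊ * ‖T ζ y‖})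
      (ae_norm_le_mul_norm_apply hS hbound),
    ae_dense_of_forall_ae_mem (ae_mem_range_apply hS hsurj)]
    with ζ hbelow hrange
  have hclosed : IsClosed {y | ‖y‖ ≤ ‖Ring.inverse S‖₊ * ‖T ζ y‖} :=
    isClosed_le continuous_norm (continuous_const.mul (T ζ).continuous.norm)
  have hall : ∀ y, ‖y‖ ≤ ‖Ring.inverse S‖₊ * ‖T ζ y‖ :=
    Set.eq_univ_iff_forall.1 (hclosed.closure_eq.symm.trans hbelow.closure_eq)
  exact (T ζ).isUnit_of_norm_le_mul_norm_of_denseRange hall hrange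

end IsDecomposableOperatorWith

theorem spectrum_of_fiber_subset_spectrum_general
    {X : Type*} [MeasurableSpace X]
    {μ : Measure X} [SigmaFinite μ]
    {H : Type*} [NormedAddCommGroup H] [InnerProductSpace ℂ H]
    [CompleteSpace H] [SecondCountableTopology H]
    (T : X → H →L[ℂ] H)
    (S : Lp H 2 μ →L[ℂ] Lp H 2 μ) (hS : IsDecomposableOperatorWith μ S T) :
    ∀ᵐ ζ ∂μ, spectrum ℂ (T ζ) ⊆ spectrum ℂ S := by
  obtain ⟨D, hDS, hDc, hD⟩ :=
    (TopologicalSpace.IsSeparable.of_separableSpace (spectrum ℂ S)ᶜ).exists_countable_dense_subset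
  have hfiber : ∀ w ∈ D, ∀ᵐ ζ ∂μ,
      w ∉ spectrum ℂ (T ζ) ∧ ‖resolvent (T ζ) w‖ ≤ ‖resolvent S w‖ := fun w hw =>
    ((hS.algebraMap_sub w).ae_isUnit (spectrum.notMem_iff.1 (hDS hw))).mono
      fun _ h => ⟨spectrum.notMem_iff.2 h.1, h.2⟩
  filter_upwards [(ae_ball_iff hDc).2 hfiber] with ζ hζ
  exact spectrum.subset_of_forall_norm_resolvent_le hD hζ

theorem spectrum_of_fiber_subset_spectrum
    {X : Type*} [MeasurableSpace X] [StandardBorelSpace X]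
    {μ : Measure X} [SigmaFinite μ]
    {H : Type*} [NormedAddCommGroup H] [InnerProductSpace ℂ H]
    [CompleteSpace H] [SecondCountableTopology H] [MeasurableSpace H] [BorelSpace H]
    (T : X → H →L[ℂ] H) (hT : MeasurableFieldOfOperators μ T)
    (S : Lp H 2 μ →L[ℂ] Lp H 2 μ) (hS : IsDecomposableOperatorWith μ S T) :
    ∀ᵐ ζ ∂μ, spectrum ℂ (T ζ) ⊆ spectrum ℂ S :=
  spectrum_of_fiber_subset_spectrum_general T S hS
end

section
/- Let S be the decomposable operator on L²(X,μ;H) with measurable field T. Assume S is normal, and assume that for μ-almost every ζ ∈ X the operator T(ζ) is normal with spectrum ℂ (T(ζ)) ⊆ spectrum ℂ S. Let f : ℂ → ℂ be continuous on spectrum ℂ S. Then the continuous functional calculus cfc f S is the decomposable operator with field ζ ↦ cfc f (T(ζ)): for every g ∈ L²(X,μ;H), ((cfc f S) g)(ζ) = (cfc f (T(ζ)))(g(ζ)) for μ-almost every ζ ∈ X. -/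
open MeasureTheory

section Aux

variable {X : Type*} [MeasurableSpace X]
    {H : Type*} [NormedAddCommGroup H] [InnerProductSpace ℂ H]
    {μ : Measure X}

local notation "⟪" x ", " y "⟫" => @inner ℂ _ _ x y

lemma decomp_algebraMap (r : ℂ) :
    IsDecomposableOperatorWith μ (algebraMap ℂ (Lp H 2 μ →L[ℂ] Lp H 2 μ) r)
      (fun _ => algebraMap ℂ (H →L[ℂ] H) r) := by
  intro h
  filter_upwards [Lp.coeFn_smul r h] with ζ e1
  have h1 : (algebraMap ℂ (Lp H 2 μ →L[ℂ] Lp H 2 μ) r) h = r • h := by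
    simp [Algebra.algebraMap_eq_smul_one]
  rw [h1]
  have h2 : (algebraMap ℂ (H →L[ℂ] H) r) ((h : X → H) ζ) = r • ((h : X → H) ζ) := by
    simp [Algebra.algebraMap_eq_smul_one]
  rw [h2, e1]
  rfl

lemma decomp_add {S₁ S₂ : Lp H 2 μ →L[ℂ] Lp H 2 μ} {T₁ T₂ : X → H →L[ℂ] H}
    (h₁ : IsDecomposableOperatorWith μ S₁ T₁) (h₂ : IsDecomposableOperatorWith μ S₂ T₂) :
    IsDecomposableOperatorWith μ (S₁ + S₂) (fun ζ => T₁ ζ + T₂ ζ) := by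
  intro h
  filter_upwards [h₁ h, h₂ h, Lp.coeFn_add (S₁ h) (S₂ h)] with ζ e1 e2 e3
  calc ((S₁ + S₂) h : X → H) ζ = ((S₁ h + S₂ h : Lp H 2 μ) : X → H) ζ := by
        rw [ContinuousLinearMap.add_apply]
    _ = (S₁ h : X → H) ζ + (S₂ h : X → H) ζ := e3
    _ = T₁ ζ ((h : X → H) ζ) + T₂ ζ ((h : X → H) ζ) := by rw [e1, e2]
    _ = (T₁ ζ + T₂ ζ) ((h : X → H) ζ) := (ContinuousLinearMap.add_apply _ _ _).symm

lemma decomp_mul {S₁ S₂ : Lp H 2 μ →L[ℂ] Lp H 2 μ} {T₁ T₂ : X → H →L[ℂ] H}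
    (h₁ : IsDecomposableOperatorWith μ S₁ T₁) (h₂ : IsDecomposableOperatorWith μ S₂ T₂) :
    IsDecomposableOperatorWith μ (S₁ * S₂) (fun ζ => T₁ ζ * T₂ ζ) := by
  intro h
  filter_upwards [h₁ (S₂ h), h₂ h] with ζ e1 e2
  calc ((S₁ * S₂) h : X → H) ζ = (S₁ (S₂ h) : X → H) ζ := rfl
    _ = T₁ ζ ((S₂ h : X → H) ζ) := e1
    _ = T₁ ζ (T₂ ζ ((h : X → H) ζ)) := by rw [e2]
    _ = (T₁ ζ * T₂ ζ) ((h : X → H) ζ) := rfl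

set_option maxHeartbeats 1000000 in
lemma decomp_star [CompleteSpace H] [SecondCountableTopology H] [SigmaFinite μ]
    {S : Lp H 2 μ →L[ℂ] Lp H 2 μ} {T : X → H →L[ℂ] H}
    (hS : IsDecomposableOperatorWith μ S T) :
    IsDecomposableOperatorWith μ (star S) (fun ζ => star (T ζ)) := by
  intro h
  have key : ∀ (k : ℕ) (y : H), ∀ᵐ ζ ∂μ, ζ ∈ spanningSets μ k →
      ⟪((star S) h : X → H) ζ, y⟫ = ⟪(h : X → H) ζ, T ζ y⟫ := by
    intro k y
    have hBm : MeasurableSet (spanningSets μ k) := measurableSet_spanningSets μ k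
    have hBf : μ (spanningSets μ k) ≠ ⊤ := (measure_spanningSets_lt_top μ k).ne
    set g : Lp H 2 μ := indicatorConstLp 2 hBm hBf y with hgdef
    set φ : X → ℂ := fun ζ => ⟪((star S) h : X → H) ζ, (g : X → H) ζ⟫
        - ⟪(h : X → H) ζ, (S g : X → H) ζ⟫ with hφdef
    have hint : Integrable φ μ :=
      (L2.integrable_inner (𝕜 := ℂ) ((star S) h) g).sub (L2.integrable_inner (𝕜 := ℂ) h (S g))
    haveI : IsFiniteMeasure (μ.restrict (spanningSets μ k)) :=
      ⟨by rw [Measure.restrict_apply_univ]; exact measure_spanningSets_lt_top μ k⟩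
    have hz : φ =ᵐ[μ.restrict (spanningSets μ k)] 0 := by
      apply ae_eq_zero_of_forall_setIntegral_eq_of_sigmaFinite
      · intro s hs _
        exact hint.restrict.restrict
      · intro s hs _
        rw [Measure.restrict_restrict hs]
        set A := s ∩ spanningSets μ k with hAdef
        have hAm : MeasurableSet A := hs.inter hBm
        have hAB : A ⊆ spanningSets μ k := Set.inter_subset_right
        have hAf : μ A ≠ ⊤ := ((measure_mono hAB).trans_lt (measure_spanningSets_lt_top μ k)).ne
        set gA : Lp H 2 μ := indicatorConstLp 2 hAm hAf y with hgAdef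
        -- g is a.e. equal to the constant y on A
        have hgcoe : (g : X → H) =ᵐ[μ] (spanningSets μ k).indicator fun _ => y :=
          indicatorConstLp_coeFn (p := 2) (hs := hBm) (hμs := hBf) (c := y)
        have hgy : (g : X → H) =ᵐ[μ.restrict A] fun _ => y := by
          refine Filter.EventuallyEq.trans (ae_restrict_of_ae hgcoe) ?_
          refine (ae_restrict_iff' hAm).mpr (ae_of_all _ fun ζ hζ => ?_)
          exact Set.indicator_of_mem (hAB hζ) _
        have hSgT : (fun ζ => ⟪(h : X → H) ζ, (S g : X → H) ζ⟫)
            =ᵐ[μ.restrict A] fun ζ => ⟪(h : X → H) ζ, T ζ y⟫ := by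
          filter_upwards [ae_restrict_of_ae (hS g), hgy] with ζ e1 e2
          rw [e1, e2]
        have i1 : IntegrableOn (fun ζ => ⟪((star S) h : X → H) ζ, y⟫) A μ := by
          refine ((L2.integrable_inner (𝕜 := ℂ) ((star S) h) g).restrict).congr ?_
          filter_upwards [hgy] with ζ e1
          rw [e1]
        have i2 : IntegrableOn (fun ζ => ⟪(h : X → H) ζ, T ζ y⟫) A μ :=
          ((L2.integrable_inner (𝕜 := ℂ) h (S g)).restrict).congr hSgT
        have step1 : ∫ ζ in A, φ ζ ∂μ
            = ∫ ζ in A, (⟪((star S) h : X → H) ζ, y⟫ - ⟪(h : X → H) ζ, T ζ y⟫) ∂μ := by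
          refine integral_congr_ae ?_
          filter_upwards [hgy, hSgT] with ζ e1 e2
          simp only [hφdef]
          rw [e1, e2]
        have step2 : ∫ ζ in A, ⟪((star S) h : X → H) ζ, y⟫ ∂μ
            = ∫ ζ in A, ⟪(h : X → H) ζ, T ζ y⟫ ∂μ := by
          have e1 : ⟪(star S) h, gA⟫ = ∫ ζ in A, ⟪((star S) h : X → H) ζ, y⟫ ∂μ := by
            rw [L2.inner_def, ← integral_indicator hAm]
            refine integral_congr_ae ?_
            filter_upwards [indicatorConstLp_coeFn (p := 2) (hs := hAm) (hμs := hAf) (c := y)]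
              with ζ e
            rw [e]
            by_cases hζ : ζ ∈ A
            · simp [hζ]
            · simp [hζ]
          have e2 : ⟪(star S) h, gA⟫ = ⟪h, S gA⟫ := by
            rw [ContinuousLinearMap.star_eq_adjoint]
            exact ContinuousLinearMap.adjoint_inner_left S gA h
          have e3 : ⟪h, S gA⟫ = ∫ ζ in A, ⟪(h : X → H) ζ, T ζ y⟫ ∂μ := by
            rw [L2.inner_def, ← integral_indicator hAm]
            refine integral_congr_ae ?_
            filter_upwards [hS gA,
              indicatorConstLp_coeFn (p := 2) (hs := hAm) (hμs := hAf) (c := y)] with ζ e e'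
            rw [e, e']
            by_cases hζ : ζ ∈ A
            · simp [hζ]
            · simp [hζ]
          rw [← e1, e2, e3]
        rw [step1, integral_sub i1 i2, step2, sub_self]
    have hz' : ∀ᵐ ζ ∂μ, ζ ∈ spanningSets μ k → φ ζ = 0 := (ae_restrict_iff' hBm).mp hz
    filter_upwards [hz', indicatorConstLp_coeFn (p := 2) (hs := hBm) (hμs := hBf) (c := y),
      hS g] with ζ e0 e1 e2 hmem
    have e3 : (g : X → H) ζ = y := by rw [e1]; exact Set.indicator_of_mem hmem _
    have e4 : φ ζ = 0 := e0 hmem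
    simp only [hφdef] at e4
    rw [e2, e3] at e4
    exact sub_eq_zero.mp e4
  haveI : Nonempty H := ⟨0⟩
  have hall : ∀ᵐ ζ ∂μ, ∀ (k n : ℕ), ζ ∈ spanningSets μ k →
      ⟪((star S) h : X → H) ζ, TopologicalSpace.denseSeq H n⟫
        = ⟪(h : X → H) ζ, T ζ (TopologicalSpace.denseSeq H n)⟫ :=
    ae_all_iff.mpr fun k => ae_all_iff.mpr fun n => key k (TopologicalSpace.denseSeq H n)
  filter_upwards [hall] with ζ hζ
  obtain ⟨k, hk⟩ : ∃ k, ζ ∈ spanningSets μ k := by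
    have : ζ ∈ ⋃ k, spanningSets μ k := by rw [iUnion_spanningSets]; trivial
    exact Set.mem_iUnion.mp this
  set v : H := ((star S) h : X → H) ζ
  set w : H := star (T ζ) ((h : X → H) ζ)
  have hvw : ∀ n : ℕ, ⟪v - w, TopologicalSpace.denseSeq H n⟫ = 0 := by
    intro n
    rw [inner_sub_left]
    have e1 : ⟪w, TopologicalSpace.denseSeq H n⟫
        = ⟪(h : X → H) ζ, T ζ (TopologicalSpace.denseSeq H n)⟫ := by
      simp only [w, ContinuousLinearMap.star_eq_adjoint]
      exact ContinuousLinearMap.adjoint_inner_left (T ζ) (TopologicalSpace.denseSeq H n)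
        ((h : X → H) ζ)
    rw [e1, hζ k n hk, sub_self]
  have hv : ∀ y : H, ⟪v - w, y⟫ = 0 := by
    refine isClosed_property (TopologicalSpace.denseRange_denseSeq H) ?_ hvw
    exact isClosed_eq (continuous_const.inner continuous_id) continuous_const
  have : v - w = 0 := by
    rw [← inner_self_eq_zero (𝕜 := ℂ)]
    exact hv (v - w)
  exact sub_eq_zero.mp this

lemma decomp_limit {S : Lp H 2 μ →L[ℂ] Lp H 2 μ} {T : X → H →L[ℂ] H}
    {Sn : ℕ → Lp H 2 μ →L[ℂ] Lp H 2 μ} {Tn : ℕ → X → H →L[ℂ] H}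
    (hn : ∀ n, IsDecomposableOperatorWith μ (Sn n) (Tn n))
    (hconv : Filter.Tendsto Sn Filter.atTop (nhds S))
    (hconvT : ∀ᵐ ζ ∂μ, Filter.Tendsto (fun n => Tn n ζ) Filter.atTop (nhds (T ζ))) :
    IsDecomposableOperatorWith μ S T := by
  intro h
  have h1 : Filter.Tendsto (fun n => Sn n h) Filter.atTop (nhds (S h)) :=
    ((ContinuousLinearMap.apply ℂ (Lp H 2 μ) h).continuous.tendsto S).comp hconv
  have h2 : TendstoInMeasure μ (fun n => ⇑(Sn n h)) Filter.atTop ⇑(S h) :=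
    tendstoInMeasure_of_tendsto_Lp h1
  obtain ⟨ns, hns, h3⟩ := h2.exists_seq_tendsto_ae
  filter_upwards [h3, hconvT, ae_all_iff.mpr fun n => hn n h] with ζ hζ1 hζ2 hζ3
  have h4 : Filter.Tendsto (fun i => Tn (ns i) ζ ((h : X → H) ζ)) Filter.atTop
      (nhds (T ζ ((h : X → H) ζ))) :=
    ((ContinuousLinearMap.apply ℂ H ((h : X → H) ζ)).continuous.tendsto (T ζ)).comp
      (hζ2.comp hns.tendsto_atTop)
  have h5 : (fun i => (Sn (ns i) h : X → H) ζ)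
      = fun i => Tn (ns i) ζ ((h : X → H) ζ) := funext fun i => hζ3 (ns i)
  exact tendsto_nhds_unique (h5 ▸ hζ1) h4

end Aux

open scoped Classical in
/-- Extension of a continuous function on `s ⊆ ℂ` by zero. -/
noncomputable def extFun (s : Set ℂ) (g : C(s, ℂ)) : ℂ → ℂ :=
  fun z => if hz : z ∈ s then g ⟨z, hz⟩ else 0

lemma extFun_apply {s : Set ℂ} (g : C(s, ℂ)) {z : ℂ} (hz : z ∈ s) :
    extFun s g z = g ⟨z, hz⟩ := dif_pos hz

lemma extFun_continuousOn (s : Set ℂ) (g : C(s, ℂ)) : ContinuousOn (extFun s g) s := by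
  rw [continuousOn_iff_continuous_restrict]
  have : s.restrict (extFun s g) = ⇑g := by
    funext x
    simp [extFun, Set.restrict, x.2]
  show Continuous (s.restrict (extFun s g)); rw [this]
  exact g.continuous

lemma extFun_const (s : Set ℂ) (r : ℂ) {z : ℂ} (hz : z ∈ s) :
    extFun s (ContinuousMap.const s r) z = r := by
  simp [extFun, dif_pos hz]

lemma extFun_id (s : Set ℂ) {z : ℂ} (hz : z ∈ s) :
    extFun s (ContinuousMap.restrict s (ContinuousMap.id ℂ)) z = z := by
  simp [extFun, dif_pos hz]

lemma extFun_star_id (s : Set ℂ) {z : ℂ} (hz : z ∈ s) :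
    extFun s (star (ContinuousMap.restrict s (ContinuousMap.id ℂ))) z = star z := by
  simp [extFun, dif_pos hz]

lemma extFun_add (s : Set ℂ) (p q : C(s, ℂ)) {z : ℂ} (hz : z ∈ s) :
    extFun s (p + q) z = extFun s p z + extFun s q z := by
  simp [extFun, dif_pos hz]

lemma extFun_mul (s : Set ℂ) (p q : C(s, ℂ)) {z : ℂ} (hz : z ∈ s) :
    extFun s (p * q) z = extFun s p z * extFun s q z := by
  simp [extFun, dif_pos hz]

lemma extFun_restrict (s : Set ℂ) (f : ℂ → ℂ) (hf : ContinuousOn f s) {z : ℂ} (hz : z ∈ s) :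
    extFun s ⟨s.restrict f, continuousOn_iff_continuous_restrict.mp hf⟩ z = f z := by
  simp [extFun, dif_pos hz, Set.restrict]

lemma cfc_extFun_dist_le {A : Type*} [CStarAlgebra A] {s : Set ℂ} [CompactSpace s]
    (p q : C(s, ℂ)) (a : A) (ha : IsStarNormal a) (hspec : spectrum ℂ a ⊆ s) :
    ‖cfc (extFun s p) a - cfc (extFun s q) a‖ ≤ ‖p - q‖ := by
  rw [← cfc_sub (extFun s p) (extFun s q) a ((extFun_continuousOn s p).mono hspec)
    ((extFun_continuousOn s q).mono hspec)]
  refine norm_cfc_le (norm_nonneg _) fun z hz => ?_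
  have hzs : z ∈ s := hspec hz
  rw [extFun_apply p hzs, extFun_apply q hzs]
  calc ‖p ⟨z, hzs⟩ - q ⟨z, hzs⟩‖ = ‖(p - q) ⟨z, hzs⟩‖ := by rw [ContinuousMap.sub_apply]
    _ ≤ ‖p - q‖ := ContinuousMap.norm_coe_le_norm _ _

set_option maxHeartbeats 1000000 in
theorem cfc_of_decomposable
    {X : Type*} [MeasurableSpace X] [StandardBorelSpace X]
    {μ : Measure X} [SigmaFinite μ]
    {H : Type*} [NormedAddCommGroup H] [InnerProductSpace ℂ H]
    [CompleteSpace H] [SecondCountableTopology H] [MeasurableSpace H] [BorelSpace H]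
    (T : X → H →L[ℂ] H) (hT : MeasurableFieldOfOperators μ T)
    (S : Lp H 2 μ →L[ℂ] Lp H 2 μ) (hS : IsDecomposableOperatorWith μ S T)
    (hSn : IsStarNormal S)
    (hTn : ∀ᵐ ζ ∂μ, IsStarNormal (T ζ) ∧ spectrum ℂ (T ζ) ⊆ spectrum ℂ S)
    (f : ℂ → ℂ) (hf : ContinuousOn f (spectrum ℂ S)) :
    IsDecomposableOperatorWith μ (cfc f S) (fun ζ => cfc f (T ζ)) := by
  haveI : CompactSpace (spectrum ℂ S) := by infer_instance
  have main : ∀ g : C(spectrum ℂ S, ℂ),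
      IsDecomposableOperatorWith μ (cfc (extFun (spectrum ℂ S) g) S)
        (fun ζ => cfc (extFun (spectrum ℂ S) g) (T ζ)) := by
    intro g
    induction g using ContinuousMap.induction_on_of_compact with
    | const r =>
        have hop : cfc (extFun (spectrum ℂ S) (ContinuousMap.const (spectrum ℂ S) r)) S
            = algebraMap ℂ (Lp H 2 μ →L[ℂ] Lp H 2 μ) r :=
          (cfc_congr fun z hz => extFun_const _ r hz).trans (cfc_const r S hSn)
        rw [hop]
        intro h
        filter_upwards [decomp_algebraMap (μ := μ) (H := H) r h, hTn] with ζ e1 e2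
        have hfld : cfc (extFun (spectrum ℂ S) (ContinuousMap.const (spectrum ℂ S) r)) (T ζ)
            = algebraMap ℂ (H →L[ℂ] H) r :=
          (cfc_congr fun z hz => extFun_const _ r (e2.2 hz)).trans (cfc_const r (T ζ) e2.1)
        rw [hfld]
        exact e1
    | id =>
        have hop : cfc (extFun (spectrum ℂ S)
            (ContinuousMap.restrict (spectrum ℂ S) (ContinuousMap.id ℂ))) S = S :=
          (cfc_congr fun z hz => extFun_id _ hz).trans (cfc_id ℂ S hSn)
        rw [hop]
        intro h
        filter_upwards [hS h, hTn] with ζ e1 e2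
        have hfld : cfc (extFun (spectrum ℂ S)
            (ContinuousMap.restrict (spectrum ℂ S) (ContinuousMap.id ℂ))) (T ζ) = T ζ :=
          (cfc_congr fun z hz => extFun_id _ (e2.2 hz)).trans (cfc_id ℂ (T ζ) e2.1)
        rw [hfld]
        exact e1
    | star_id =>
        have hop : cfc (extFun (spectrum ℂ S)
            (star (ContinuousMap.restrict (spectrum ℂ S) (ContinuousMap.id ℂ)))) S = star S :=
          (cfc_congr fun z hz => extFun_star_id _ hz).trans (cfc_star_id S hSn)
        rw [hop]
        intro h
        filter_upwards [decomp_star hS h, hTn] with ζ e1 e2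
        have hfld : cfc (extFun (spectrum ℂ S)
            (star (ContinuousMap.restrict (spectrum ℂ S) (ContinuousMap.id ℂ)))) (T ζ)
            = star (T ζ) :=
          (cfc_congr fun z hz => extFun_star_id _ (e2.2 hz)).trans (cfc_star_id (T ζ) e2.1)
        rw [hfld]
        exact e1
    | add p q hp hq =>
        have hop : cfc (extFun (spectrum ℂ S) (p + q)) S
            = cfc (extFun (spectrum ℂ S) p) S + cfc (extFun (spectrum ℂ S) q) S :=
          (cfc_congr fun z hz => extFun_add _ p q hz).trans
            (cfc_add S _ _ ((extFun_continuousOn _ p).mono subset_rfl)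
              ((extFun_continuousOn _ q).mono subset_rfl))
        rw [hop]
        intro h
        filter_upwards [decomp_add hp hq h, hTn] with ζ e1 e2
        have hfld : cfc (extFun (spectrum ℂ S) (p + q)) (T ζ)
            = cfc (extFun (spectrum ℂ S) p) (T ζ) + cfc (extFun (spectrum ℂ S) q) (T ζ) :=
          (cfc_congr fun z hz => extFun_add _ p q (e2.2 hz)).trans
            (cfc_add (T ζ) _ _ ((extFun_continuousOn _ p).mono e2.2)
              ((extFun_continuousOn _ q).mono e2.2))
        rw [hfld]
        exact e1
    | mul p q hp hq =>
        have hop : cfc (extFun (spectrum ℂ S) (p * q)) S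
            = cfc (extFun (spectrum ℂ S) p) S * cfc (extFun (spectrum ℂ S) q) S :=
          (cfc_congr fun z hz => extFun_mul _ p q hz).trans
            (cfc_mul _ _ S ((extFun_continuousOn _ p).mono subset_rfl)
              ((extFun_continuousOn _ q).mono subset_rfl))
        rw [hop]
        intro h
        filter_upwards [decomp_mul hp hq h, hTn] with ζ e1 e2
        have hfld : cfc (extFun (spectrum ℂ S) (p * q)) (T ζ)
            = cfc (extFun (spectrum ℂ S) p) (T ζ) * cfc (extFun (spectrum ℂ S) q) (T ζ) :=
          (cfc_congr fun z hz => extFun_mul _ p q (e2.2 hz)).trans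
            (cfc_mul _ _ (T ζ) ((extFun_continuousOn _ p).mono e2.2)
              ((extFun_continuousOn _ q).mono e2.2))
        rw [hfld]
        exact e1
    | frequently g hg =>
        have hmem : g ∈ closure {g' : C(spectrum ℂ S, ℂ) |
            IsDecomposableOperatorWith μ (cfc (extFun (spectrum ℂ S) g') S)
              (fun ζ => cfc (extFun (spectrum ℂ S) g') (T ζ))} := mem_closure_iff_frequently.mpr hg
        obtain ⟨u, hu, hulim⟩ := mem_closure_iff_seq_limit.mp hmem
        have hnorm : Filter.Tendsto (fun n => ‖u n - g‖) Filter.atTop (nhds 0) :=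
          tendsto_iff_norm_sub_tendsto_zero.mp hulim
        have hconvS : Filter.Tendsto (fun n => cfc (extFun (spectrum ℂ S) (u n)) S) Filter.atTop
            (nhds (cfc (extFun (spectrum ℂ S) g) S)) := by
          refine tendsto_iff_norm_sub_tendsto_zero.mpr
            (squeeze_zero (fun n => norm_nonneg _) (fun n => ?_) hnorm)
          exact cfc_extFun_dist_le (u n) g S hSn subset_rfl
        have hconvT : ∀ᵐ ζ ∂μ, Filter.Tendsto (fun n => cfc (extFun (spectrum ℂ S) (u n)) (T ζ))
            Filter.atTop (nhds (cfc (extFun (spectrum ℂ S) g) (T ζ))) := by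
          filter_upwards [hTn] with ζ hζ
          refine tendsto_iff_norm_sub_tendsto_zero.mpr
            (squeeze_zero (fun n => norm_nonneg _) (fun n => ?_) hnorm)
          exact cfc_extFun_dist_le (u n) g (T ζ) hζ.1 hζ.2
        exact decomp_limit (fun n => hu n) hconvS hconvT
  have key := main ⟨(spectrum ℂ S).restrict f, continuousOn_iff_continuous_restrict.mp hf⟩
  have hS0 : cfc (extFun (spectrum ℂ S)
      ⟨(spectrum ℂ S).restrict f, continuousOn_iff_continuous_restrict.mp hf⟩) S = cfc f S :=
    cfc_congr fun z hz => extFun_restrict _ f hf hz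
  intro h
  filter_upwards [key h, hTn] with ζ e1 e2
  have e3 : cfc (extFun (spectrum ℂ S)
      ⟨(spectrum ℂ S).restrict f, continuousOn_iff_continuous_restrict.mp hf⟩) (T ζ)
      = cfc f (T ζ) :=
    cfc_congr fun z hz => extFun_restrict _ f hf (e2.2 hz)
  rw [← hS0, ← e3]
  exact e1
end

section
/- Let S be the decomposable operator on L²(X,μ;H) with measurable field T. Then S is self-adjoint (IsSelfAdjoint S, i.e. S* = S) if and only if T(ζ) is self-adjoint for μ-almost every ζ ∈ X. -/
open MeasureTheory

local notation "⟪" x ", " y "⟫" => @inner ℂ _ _ x y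

theorem isSelfAdjoint_of_decomposable_iff
    {X : Type*} [MeasurableSpace X] [StandardBorelSpace X]
    {μ : Measure X} [SigmaFinite μ]
    {H : Type*} [NormedAddCommGroup H] [InnerProductSpace ℂ H]
    [CompleteSpace H] [SecondCountableTopology H] [MeasurableSpace H] [BorelSpace H]
    (T : X → H →L[ℂ] H) (hT : MeasurableFieldOfOperators μ T)
    (S : Lp H 2 μ →L[ℂ] Lp H 2 μ) (hS : IsDecomposableOperatorWith μ S T) :
    IsSelfAdjoint S ↔ ∀ᵐ ζ ∂μ, IsSelfAdjoint (T ζ) := by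
  classical
  obtain ⟨hTm, C, hC⟩ := hT
  rw [ContinuousLinearMap.isSelfAdjoint_iff_isSymmetric]
  constructor
  · intro hsym
    have key : ∀ x y : H, ∀ᵐ ζ ∂μ, ⟪T ζ x, y⟫ = ⟪x, T ζ y⟫ := by
      intro x y
      set a : X → ℂ := fun ζ => ⟪T ζ x, y⟫ with ha
      set b : X → ℂ := fun ζ => ⟪x, T ζ y⟫ with hb
      have ham : Measurable a := (hTm x).inner measurable_const
      have hbm : Measurable b := measurable_const.inner (hTm y)
      have haI : ∀ s : Set X, MeasurableSet s → μ s < ⊤ → IntegrableOn a s μ := by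
        intro s hs hμs
        refine Integrable.mono' (g := fun _ => C * ‖x‖ * ‖y‖)
          (integrableOn_const hμs.ne) ham.aestronglyMeasurable ?_
        filter_upwards [ae_restrict_of_ae hC] with ζ hζ
        have hTx : ‖T ζ x‖ ≤ C * ‖x‖ := ((T ζ).le_opNorm x).trans (by gcongr)
        calc ‖a ζ‖ ≤ ‖T ζ x‖ * ‖y‖ := norm_inner_le_norm _ _
          _ ≤ C * ‖x‖ * ‖y‖ := mul_le_mul_of_nonneg_right hTx (norm_nonneg y)
      have hbI : ∀ s : Set X, MeasurableSet s → μ s < ⊤ → IntegrableOn b s μ := by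
        intro s hs hμs
        refine Integrable.mono' (g := fun _ => ‖x‖ * (C * ‖y‖))
          (integrableOn_const hμs.ne) hbm.aestronglyMeasurable ?_
        filter_upwards [ae_restrict_of_ae hC] with ζ hζ
        have hTy : ‖T ζ y‖ ≤ C * ‖y‖ := ((T ζ).le_opNorm y).trans (by gcongr)
        calc ‖b ζ‖ ≤ ‖x‖ * ‖T ζ y‖ := norm_inner_le_norm _ _
          _ ≤ ‖x‖ * (C * ‖y‖) := mul_le_mul_of_nonneg_left hTy (norm_nonneg x)
      have hzero : ∀ s : Set X, MeasurableSet s → μ s < ⊤ →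
          ∫ ζ in s, (a ζ - b ζ) ∂μ = 0 := by
        intro s hs hμs
        set f : Lp H 2 μ := indicatorConstLp 2 hs hμs.ne x with hfdef
        set g : Lp H 2 μ := indicatorConstLp 2 hs hμs.ne y with hgdef
        have h1 : ⟪S f, g⟫ = ∫ ζ in s, a ζ ∂μ := by
          rw [L2.inner_def, ← integral_indicator hs]
          apply integral_congr_ae
          filter_upwards [hS f, indicatorConstLp_coeFn (p := 2) (c := x),
            indicatorConstLp_coeFn (p := 2) (c := y)] with ζ h1 h2 h3
          rw [h1, h2, h3]
          by_cases hmem : ζ ∈ s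
          · simp [Set.indicator_of_mem hmem, ha]
          · simp [Set.indicator_of_notMem hmem]
        have h2 : ⟪f, S g⟫ = ∫ ζ in s, b ζ ∂μ := by
          rw [L2.inner_def, ← integral_indicator hs]
          apply integral_congr_ae
          filter_upwards [hS g, indicatorConstLp_coeFn (p := 2) (c := x),
            indicatorConstLp_coeFn (p := 2) (c := y)] with ζ h1 h2 h3
          rw [h1, h2, h3]
          by_cases hmem : ζ ∈ s
          · simp [Set.indicator_of_mem hmem, hb]
          · simp [Set.indicator_of_notMem hmem]
        rw [integral_sub (haI s hs hμs) (hbI s hs hμs), ← h1, ← h2, sub_eq_zero]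
        exact hsym f g
      have := ae_eq_zero_of_forall_setIntegral_eq_of_sigmaFinite
        (f := fun ζ => a ζ - b ζ)
        (fun s hs hμs => (haI s hs hμs).sub (hbI s hs hμs)) hzero
      filter_upwards [this] with ζ hζ
      exact sub_eq_zero.mp hζ
    have : Nonempty H := ⟨0⟩
    set u : ℕ → H := TopologicalSpace.denseSeq H with hu
    have hur : DenseRange u := TopologicalSpace.denseRange_denseSeq H
    have hall : ∀ᵐ ζ ∂μ, ∀ n m : ℕ, ⟪T ζ (u n), u m⟫ = ⟪u n, T ζ (u m)⟫ := by
      rw [ae_all_iff]; intro n; rw [ae_all_iff]; intro m; exact key (u n) (u m)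
    filter_upwards [hall] with ζ hζ
    rw [ContinuousLinearMap.isSelfAdjoint_iff_isSymmetric]
    intro p q
    have h1 : ∀ n : ℕ, (fun y => ⟪T ζ (u n), y⟫) = fun y => ⟪u n, T ζ y⟫ := fun n =>
      Continuous.ext_on hur (continuous_const.inner continuous_id)
        (continuous_const.inner (T ζ).continuous)
        (by rintro _ ⟨m, rfl⟩; exact hζ n m)
    have h2 : (fun x => ⟪T ζ x, q⟫) = fun x => ⟪x, T ζ q⟫ :=
      Continuous.ext_on hur ((T ζ).continuous.inner continuous_const)
        (continuous_id.inner continuous_const)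
        (by rintro _ ⟨n, rfl⟩; exact congrFun (h1 n) q)
    exact congrFun h2 p
  · intro hae f g
    show ⟪S f, g⟫ = ⟪f, S g⟫
    rw [L2.inner_def, L2.inner_def]
    apply integral_congr_ae
    filter_upwards [hS f, hS g, hae] with ζ hf hg hta
    rw [hf, hg]
    exact (ContinuousLinearMap.isSelfAdjoint_iff_isSymmetric.mp hta) _ _
end

section
/- Let A be a unital C*-algebra and a ∈ A. Then the map λ ↦ log((a − λ·1)*·(a − λ·1) + 1), defined via the continuous functional calculus (CFC.log), is continuous from ℂ to A in the norm topology. -/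
open CStarAlgebra in
theorem isUnit_star_mul_self_add_one {A : Type*} [CStarAlgebra A] (b : A) :
    IsUnit (star b * b + 1) := by
  -- a bare `CStarAlgebra` carries no order; the spectral order supplies one
  let := spectralOrder A
  let := spectralOrderedRing A
  exact (IsStrictlyPositive.nonneg_add (star_mul_self_nonneg b) isStrictlyPositive_one).isUnit

theorem continuous_log_one_add_abs_sq_shift
    {A : Type*} [CStarAlgebra A] (a : A) :
    Continuous fun lam : ℂ =>
      CFC.log (star (a - lam • 1) * (a - lam • 1) + 1) :=
  CFC.continuousOn_log.comp_continuous (by fun_prop) fun _ =>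
    ⟨(IsSelfAdjoint.star_mul_self _).add (.one A), isUnit_star_mul_self_add_one _⟩
end
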